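/- arXiv:1804.03324 — 2 statements merged into one kernel-verified Lean document; each statement's English description precedes it below -/
import Mathlib

section
/- Let $H_n$ be a finite-dimensional subspace of $H^s(\mathbb{R}^N)$ (with the $H^s$ norm $\|\cdot\|$) and let $l>0$. Then there exists $\tau>0$ such that for all $u\in H_n$ with $\|u\|\le\tau$, $\frac12\int_{\mathbb{R}^N}|u|^2\,dx \ge \int_{\{x:|u(x)|>l\}}|u(x)|^2\,dx$. -/
/-!
For `v` in a finite-dimensional subspace of `L²`, expanding `v` in an orthonormal basis `(bᵢ)`
and applying Cauchy–Schwarz gives `v(x)² ≤ ‖v‖₂² · g(x)` with `g = ∑ bᵢ²` integrable. By absolute continuity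
of `∫ g`, the mass `∫_B v²` is at most `‖v‖₂² / 2` as soon as `B` has small measure, and by
Chebyshev `{|u| > l}` has measure at most `‖u‖₂² / l²`, which is small when `‖u‖_{H^s}` is.
-/

open MeasureTheory

/-- Squared Gagliardo seminorm. -/
noncomputable def gagliardoSq (N : ℕ) (s : ℝ) (u : EuclideanSpace ℝ (Fin N) → ℝ) : ℝ :=
  ∫ x, ∫ y, (u x - u y)^2 / ‖x - y‖ ^ ((N : ℝ) + 2*s)

/-- The $H^s$ norm. -/
noncomputable def hsNorm (N : ℕ) (s : ℝ) (u : EuclideanSpace ℝ (Fin N) → ℝ) : ℝ :=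
  Real.sqrt (gagliardoSq N s u + ∫ x, (u x)^2)

namespace MeasureTheory

variable {α : Type*} [MeasurableSpace α] {μ : Measure α}

theorem L2.norm_sq_eq_integral_sq (f : Lp ℝ 2 μ) : ‖f‖ ^ 2 = ∫ x, f x ^ 2 ∂μ := by
  rw [← real_inner_self_eq_norm_sq, L2.inner_def]
  simp [sq]

theorem MemLp.norm_toLp_sq {f : α → ℝ} (hf : MemLp f 2 μ) :
    ‖hf.toLp f‖ ^ 2 = ∫ x, f x ^ 2 ∂μ := by
  rw [L2.norm_sq_eq_integral_sq]
  exact integral_congr_ae (hf.coeFn_toLp.mono fun x hx => by simp only [hx])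

theorem L2.exists_integrable_sq_le_norm_sq_mul (V : Submodule ℝ (Lp ℝ 2 μ))
    [FiniteDimensional ℝ V] :
    ∃ g : α → ℝ, Integrable g μ ∧ 0 ≤ g ∧ ∀ v ∈ V, ∀ᵐ x ∂μ, v x ^ 2 ≤ ‖v‖ ^ 2 * g x := by
  let b := stdOrthonormalBasis ℝ V
  let e : _ → Lp ℝ 2 μ := fun i => b i
  refine ⟨fun x => ∑ i, e i x ^ 2,
    integrable_finsetSum _ fun i _ => (Lp.memLp (e i)).integrable_sq,
    fun x => Finset.sum_nonneg fun i _ => sq_nonneg _, fun v hv => ?_⟩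
  set c := b.repr ⟨v, hv⟩
  have hexpand : v = ∑ i, c i • e i := by
    simpa [e] using congrArg Subtype.val (b.sum_repr ⟨v, hv⟩).symm
  have hparseval : ‖v‖ ^ 2 = ∑ i, c i ^ 2 := by
    have : ‖v‖ = ‖c‖ := (b.repr.norm_map ⟨v, hv⟩).symm
    simp [this, EuclideanSpace.norm_sq_eq]
  have hcoe : ∀ᵐ x ∂μ, v x = ∑ i, c i * e i x := by
    rw [hexpand]
    filter_upwards [Lp.coeFn_fun_finsetSum Finset.univ (fun i => c i • e i),
      Filter.eventually_all.2 fun i => Lp.coeFn_smul (c i) (e i)] with x hsum hsmul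
    rw [hsum]
    simp only [hsmul, Pi.smul_apply, smul_eq_mul]
  filter_upwards [hcoe] with x hx
  rw [hx, hparseval]
  exact Finset.sum_mul_sq_le_sq_mul_sq _ _ _

theorem L2.exists_setIntegral_sq_le (V : Submodule ℝ (Lp ℝ 2 μ)) [FiniteDimensional ℝ V]
    {ε : ℝ} (hε : 0 < ε) :
    ∃ δ : ℝ, 0 < δ ∧ ∀ s, μ s ≤ ENNReal.ofReal δ → ∀ v ∈ V,
      ∫ x in s, v x ^ 2 ∂μ ≤ ε * ‖v‖ ^ 2 := by
  obtain ⟨g, hg, hg0, hbound⟩ := L2.exists_integrable_sq_le_norm_sq_mul V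
  obtain ⟨δ', hδ'0, hδ'⟩ := exists_pos_setLIntegral_lt_of_measure_lt
    hg.lintegral_lt_top.ne (ENNReal.ofReal_pos.2 hε).ne'
  obtain ⟨δ, -, hδ0, hδδ'⟩ := ENNReal.lt_iff_exists_real_btwn.1 hδ'0
  refine ⟨δ, ENNReal.ofReal_pos.1 hδ0, fun s hs v hv => ?_⟩
  have hgs : ∫ x in s, g x ∂μ ≤ ε := by
    rw [integral_eq_lintegral_of_nonneg_ae (ae_of_all _ hg0) hg.aestronglyMeasurable.restrict]
    exact ENNReal.toReal_le_of_le_ofReal hε.le (hδ' s (hs.trans_lt hδδ')).le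
  calc ∫ x in s, v x ^ 2 ∂μ ≤ ∫ x in s, ‖v‖ ^ 2 * g x ∂μ :=
        integral_mono_ae (Lp.memLp v).integrable_sq.integrableOn
          (hg.const_mul _).integrableOn (ae_restrict_of_ae (hbound v hv))
    _ = ‖v‖ ^ 2 * ∫ x in s, g x ∂μ := integral_const_mul _ _
    _ ≤ ‖v‖ ^ 2 * ε := by gcongr
    _ = ε * ‖v‖ ^ 2 := mul_comm _ _

theorem exists_setIntegral_sq_le_of_finiteDimensional (V : Submodule ℝ (α → ℝ))
    [FiniteDimensional ℝ V] (hV : ∀ u ∈ V, MemLp u 2 μ) {ε : ℝ} (hε : 0 < ε) :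
    ∃ δ : ℝ, 0 < δ ∧ ∀ s, μ s ≤ ENNReal.ofReal δ → ∀ u ∈ V,
      ∫ x in s, u x ^ 2 ∂μ ≤ ε * ∫ x, u x ^ 2 ∂μ := by
  let T : V →ₗ[ℝ] Lp ℝ 2 μ :=
    { toFun := fun u => (hV u u.2).toLp u
      map_add' := fun u w => MemLp.toLp_add (hV u u.2) (hV w w.2)
      map_smul' := fun c u => MemLp.toLp_const_smul c (hV u u.2) }
  obtain ⟨δ, hδ, hsmall⟩ := L2.exists_setIntegral_sq_le (LinearMap.range T) hε
  refine ⟨δ, hδ, fun s hs u hu => ?_⟩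
  have hcoe : ∫ x in s, (T ⟨u, hu⟩ : Lp ℝ 2 μ) x ^ 2 ∂μ = ∫ x in s, u x ^ 2 ∂μ :=
    integral_congr_ae <| ae_restrict_of_ae <| (hV u hu).coeFn_toLp.mono fun x hx => by
      simp only [T, LinearMap.coe_mk, AddHom.coe_mk, hx]
  have hLp := hsmall s hs (T ⟨u, hu⟩) (LinearMap.mem_range_self T _)
  have hnorm : ‖(T ⟨u, hu⟩ : Lp ℝ 2 μ)‖ ^ 2 = ∫ x, u x ^ 2 ∂μ := (hV u hu).norm_toLp_sq
  rwa [hcoe, hnorm] at hLp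

theorem measure_lt_abs_le_integral_sq_div {f : α → ℝ} (hf : MemLp f 2 μ) {l : ℝ} (hl : 0 < l) :
    μ {x | l < |f x|} ≤ ENNReal.ofReal ((∫ x, f x ^ 2 ∂μ) / l ^ 2) := by
  have hsub : {x | l < |f x|} ⊆ {x | l ^ 2 ≤ f x ^ 2} := fun x (hx : l < |f x|) => by
    show l ^ 2 ≤ f x ^ 2
    rw [← sq_abs (f x)]
    exact pow_le_pow_left₀ hl.le hx.le 2
  have hfin : μ {x | l ^ 2 ≤ f x ^ 2} ≠ ⊤ :=
    (hf.integrable_sq.measure_ge_lt_top (by positivity)).ne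
  have hmarkov := mul_meas_ge_le_integral_of_nonneg (ae_of_all _ fun x => sq_nonneg (f x))
    hf.integrable_sq (l ^ 2)
  calc μ {x | l < |f x|} ≤ μ {x | l ^ 2 ≤ f x ^ 2} := measure_mono hsub
    _ = ENNReal.ofReal (μ.real {x | l ^ 2 ≤ f x ^ 2}) := (ENNReal.ofReal_toReal hfin).symm
    _ ≤ _ := ENNReal.ofReal_le_ofReal (by rw [le_div_iff₀ (by positivity)]; linarith)

end MeasureTheory

theorem integral_sq_le_hsNorm_sq (N : ℕ) (s : ℝ) (u : EuclideanSpace ℝ (Fin N) → ℝ) :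
    ∫ x, u x ^ 2 ≤ hsNorm N s u ^ 2 := by
  have hG : 0 ≤ gagliardoSq N s u :=
    integral_nonneg fun x => integral_nonneg fun y => by positivity
  have hI : 0 ≤ ∫ x, u x ^ 2 := integral_nonneg fun x => sq_nonneg _
  rw [hsNorm, Real.sq_sqrt (add_nonneg hG hI)]
  linarith

theorem stmt_8_general {N : ℕ} {s : ℝ}
    (Hn : Submodule ℝ (EuclideanSpace ℝ (Fin N) → ℝ))
    (hfin : FiniteDimensional ℝ Hn)
    (hmem : ∀ u ∈ Hn, MemLp u 2 volume)
    (l : ℝ) (hl : 0 < l) :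
    ∃ τ : ℝ, 0 < τ ∧ ∀ u ∈ Hn, hsNorm N s u ≤ τ →
      (1/2) * ∫ x, (u x)^2 ≥ ∫ x in {x | l < |u x|}, (u x)^2 := by
  obtain ⟨δ, hδ, hsmall⟩ :=
    exists_setIntegral_sq_le_of_finiteDimensional Hn hmem (μ := volume) one_half_pos
  refine ⟨l * √δ, by positivity, fun u hu hτ => ?_⟩
  have hL2 : ∫ x, u x ^ 2 ≤ l ^ 2 * δ := calc
    ∫ x, u x ^ 2 ≤ hsNorm N s u ^ 2 := integral_sq_le_hsNorm_sq N s u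
    _ ≤ (l * √δ) ^ 2 := by gcongr; exact Real.sqrt_nonneg _
    _ = l ^ 2 * δ := by rw [mul_pow, Real.sq_sqrt hδ.le]
  have hB : volume {x | l < |u x|} ≤ ENNReal.ofReal δ :=
    (measure_lt_abs_le_integral_sq_div (hmem u hu) hl).trans <|
      ENNReal.ofReal_le_ofReal <| by rw [div_le_iff₀ (by positivity)]; linarith
  exact hsmall _ hB u hu

theorem stmt_8 {N : ℕ} {s : ℝ} (hs : 0 < s) (hs1 : s < 1) (hN : 2 * s < N)
    (Hn : Submodule ℝ (EuclideanSpace ℝ (Fin N) → ℝ))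
    (hfin : FiniteDimensional ℝ Hn)
    (hmem : ∀ u ∈ Hn, MemLp u 2 volume)
    (l : ℝ) (hl : 0 < l) :
    ∃ τ : ℝ, 0 < τ ∧ ∀ u ∈ Hn, hsNorm N s u ≤ τ →
      (1/2) * ∫ x, (u x)^2 ≥ ∫ x in {x | l < |u x|}, (u x)^2 :=
  stmt_8_general Hn hfin hmem l hl
end

section
/- Let $H$ be a real Hilbert space continuously embedded in $L^2(\mathbb{R}^N)$ and locally compactly embedded, i.e. bounded sequences in $H$ have subsequences converging in $L^2(B_R)$ for every $R>0$. Let $r\in(1,2)$, $\xi\in L^{2/(2-r)}(\mathbb{R}^N)$ nonnegative, and let $g:\mathbb{R}^N\times\mathbb{R}\to\mathbb{R}$ satisfy $|g(x,u)|\le r\,\xi(x)|u|^{r-1}$. If $(u_n)\subset H$ is bounded and $u_n\rightharpoonup u$ in $H$ with $u_n\to u$ in $L^2_{loc}(\mathbb{R}^N)$, then $\int_{\mathbb{R}^N}\big(g(x,u_n)-g(x,u)\big)(u_n-u)\,dx\to0$ as $n\to\infty$. -/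
/-!
Write `f n = E (u n)`, `f₀ = E ulim`. The growth bound on `g` dominates the integrand by
`r ξ (|f n|^(r-1) + |f₀|^(r-1)) |f n - f₀|`, and Hölder's inequality with exponents
`2/(2-r)`, `2/(r-1)`, `2` bounds its integral over any set `S` by
`‖ξ‖_{L^{2/(2-r)}(S)} · M^(r-1) · ‖f n - f₀‖_{L²(S)}`, where `M` bounds the `L²` norms.
On a ball the last factor tends to `0` by local `L²` convergence; outside a large ball the first
factor is small because `ξ ∈ L^{2/(2-r)}`.
-/

open MeasureTheory Filter Topology ENNReal

theorem ENNReal.tendsto_nhds_zero_of_le_add {ι κ : Type*} {l : Filter ι} [l.NeBot]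
    {l' : Filter κ} {a : κ → ℝ≥0∞} {b : ι → κ → ℝ≥0∞} {c : ι → ℝ≥0∞}
    (hb : ∀ᶠ i in l, Tendsto (b i) l' (𝓝 0)) (hc : Tendsto c l (𝓝 0))
    (hab : ∀ i n, a n ≤ b i n + c i) : Tendsto a l' (𝓝 0) := by
  rw [ENNReal.tendsto_nhds_zero] at hc ⊢
  intro ε hε
  have hε2 : 0 < ε / 2 := ENNReal.half_pos hε.ne'
  obtain ⟨i, hbi, hci⟩ := (hb.and (hc _ hε2)).exists
  filter_upwards [ENNReal.tendsto_nhds_zero.1 hbi _ hε2] with n hn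
  calc a n ≤ b i n + c i := hab i n
    _ ≤ ε / 2 + ε / 2 := add_le_add hn hci
    _ = ε := ENNReal.add_halves ε

theorem Metric.iInter_compl_ball {X : Type*} [PseudoMetricSpace X] (x : X) :
    ⋂ R : ℝ, (Metric.ball x R)ᶜ = ∅ :=
  Set.eq_empty_of_forall_notMem fun y hy =>
    Set.mem_iInter.1 hy (dist y x + 1) (Metric.mem_ball.2 (lt_add_one _))

theorem tendsto_setLIntegral_compl_ball_zero {X : Type*} [PseudoMetricSpace X] [MeasurableSpace X]
    [OpensMeasurableSpace X] {μ : Measure X} {F : X → ℝ≥0∞} (hF : ∫⁻ y, F y ∂μ ≠ ∞) (x : X) :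
    Tendsto (fun R : ℝ => ∫⁻ y in (Metric.ball x R)ᶜ, F y ∂μ) atTop (𝓝 0) := by
  have hmeas : ∀ R : ℝ, MeasurableSet (Metric.ball x R)ᶜ := fun R => measurableSet_ball.compl
  simp_rw [← withDensity_apply _ (hmeas _)]
  have := tendsto_measure_iInter_atTop (μ := μ.withDensity F) (fun R => (hmeas R).nullMeasurableSet)
    (fun R R' h => Set.compl_subset_compl.2 (Metric.ball_subset_ball h))
    ⟨0, by
      rw [withDensity_apply _ (hmeas 0)]
      exact ne_top_of_le_ne_top hF (setLIntegral_le_lintegral _ _)⟩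
  rwa [Metric.iInter_compl_ball, measure_empty] at this

theorem MeasureTheory.MemLp.tendsto_eLpNorm_restrict_compl_ball {X E : Type*} [PseudoMetricSpace X]
    [MeasurableSpace X] [OpensMeasurableSpace X] [NormedAddCommGroup E] {μ : Measure X}
    {p : ℝ≥0∞} (hp : p ≠ ∞) {ξ : X → E} (hξ : MemLp ξ p μ) (x : X) :
    Tendsto (fun R : ℝ => eLpNorm ξ p (μ.restrict (Metric.ball x R)ᶜ)) atTop (𝓝 0) := by
  rcases eq_or_ne p 0 with rfl | hp0
  · simp
  have hp_pos : 0 < p.toReal := ENNReal.toReal_pos hp0 hp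
  have := (ENNReal.continuous_rpow_const (y := 1 / p.toReal)).tendsto 0 |>.comp
    (tendsto_setLIntegral_compl_ball_zero
      (lintegral_rpow_enorm_lt_top_of_eLpNorm_lt_top hp0 hp hξ.2).ne x)
  rw [ENNReal.zero_rpow_of_pos (by positivity)] at this
  simpa only [eLpNorm_eq_lintegral_rpow_enorm_toReal hp0 hp, Function.comp_def] using this

theorem tendsto_eLpNorm_two_of_tendsto_integral_sq {α κ : Type*} [MeasurableSpace α]
    {μ : Measure α} {l : Filter κ} {f : κ → α → ℝ} (hf : ∀ n, MemLp (f n) 2 μ)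
    (h : Tendsto (fun n => ∫ x, f n x ^ 2 ∂μ) l (𝓝 0)) :
    Tendsto (fun n => eLpNorm (f n) 2 μ) l (𝓝 0) := by
  have hsq : ∀ n, eLpNorm (f n) 2 μ = ENNReal.ofReal ((∫ x, f n x ^ 2 ∂μ) ^ (2 : ℝ)⁻¹) := by
    intro n
    simp [(hf n).eLpNorm_eq_integral_rpow_norm two_ne_zero ofNat_ne_top]
  simp_rw [hsq]
  have := ((Real.continuousAt_rpow_const 0 (2 : ℝ)⁻¹ (by norm_num)).tendsto.comp h)
  rw [Real.zero_rpow (by norm_num)] at this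
  simpa using ENNReal.tendsto_ofReal this

theorem ContinuousLinearMap.eLpNorm_apply_le {𝕜 α H F : Type*} [NontriviallyNormedField 𝕜]
    [NormedAddCommGroup H] [NormedSpace 𝕜 H] [NormedAddCommGroup F] [NormedSpace 𝕜 F]
    [MeasurableSpace α] {μ : Measure α} {p : ℝ≥0∞} [Fact (1 ≤ p)] (T : H →L[𝕜] Lp F p μ)
    {v : H} {C : ℝ} (hv : ‖v‖ ≤ C) : eLpNorm (T v) p μ ≤ ‖T‖ₑ * ENNReal.ofReal C := by
  rw [← Lp.enorm_def]
  exact T.le_opENorm_of_le (by rw [← ofReal_norm]; exact ENNReal.ofReal_le_ofReal hv)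

section
variable {α : Type*} [MeasurableSpace α] {μ : Measure α}

theorem ENNReal.lintegral_mul_mul_le_Lp_mul_Lq_mul_Lr {f g h : α → ℝ≥0∞}
    (hf : AEMeasurable f μ) (hg : AEMeasurable g μ) (hh : AEMeasurable h μ)
    {p q s : ℝ} (hp : 0 < p) (hq : 0 < q) (hs : 0 < s) (hpqs : 1 / p + 1 / q + 1 / s = 1) :
    ∫⁻ x, f x * g x * h x ∂μ ≤
      (∫⁻ x, f x ^ p ∂μ) ^ (1 / p) * (∫⁻ x, g x ^ q ∂μ) ^ (1 / q) *
        (∫⁻ x, h x ^ s ∂μ) ^ (1 / s) := by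
  have key := ENNReal.lintegral_prod_norm_pow_le (μ := μ) Finset.univ
    (f := ![fun x => f x ^ p, fun x => g x ^ q, fun x => h x ^ s]) (p := ![1 / p, 1 / q, 1 / s])
    (by
      intro i _
      fin_cases i
      · exact hf.pow_const p
      · exact hg.pow_const q
      · exact hh.pow_const s)
    (by simpa [Fin.sum_univ_three, one_div] using hpqs)
    (by intro i _; fin_cases i <;> simp <;> positivity)
  have hinv : ∀ t : ℝ, 0 < t → ∀ y : ℝ≥0∞, (y ^ t) ^ (1 / t) = y := fun t ht y => by
    rw [← ENNReal.rpow_mul, mul_one_div_cancel ht.ne', ENNReal.rpow_one]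
  simpa only [Fin.prod_univ_three, Matrix.cons_val_zero, Matrix.cons_val_one, Matrix.head_cons,
    Matrix.cons_val_two, Matrix.tail_cons, hinv _ hp, hinv _ hq, hinv _ hs] using key

variable {E F G : Type*} [NormedAddCommGroup E] [NormedAddCommGroup F] [NormedAddCommGroup G]

theorem lintegral_enorm_mul_rpow_mul_le {r : ℝ} (hr1 : 1 < r) (hr2 : r < 2) {ξ : α → E}
    {f : α → F} {d : α → G} (hξ : AEStronglyMeasurable ξ μ) (hf : AEStronglyMeasurable f μ)
    (hd : AEStronglyMeasurable d μ) :
    ∫⁻ x, ‖ξ x‖ₑ * ‖f x‖ₑ ^ (r - 1) * ‖d x‖ₑ ∂μ ≤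
      eLpNorm ξ (ENNReal.ofReal (2 / (2 - r))) μ * eLpNorm f 2 μ ^ (r - 1) * eLpNorm d 2 μ := by
  have hp : 0 < 2 / (2 - r) := div_pos two_pos (by linarith)
  have hr : 0 < r - 1 := by linarith
  have hq : 0 < 2 / (r - 1) := div_pos two_pos hr
  have hmid : (∫⁻ x, (‖f x‖ₑ ^ (r - 1)) ^ (2 / (r - 1)) ∂μ) ^ (1 / (2 / (r - 1))) =
      ((∫⁻ x, ‖f x‖ₑ ^ (2 : ℝ) ∂μ) ^ (1 / (2 : ℝ))) ^ (r - 1) := by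
    simp_rw [← ENNReal.rpow_mul]
    congr 1
    · congr 1; ext x; congr 1; field_simp
    · field_simp
  calc _ ≤ (∫⁻ x, ‖ξ x‖ₑ ^ (2 / (2 - r)) ∂μ) ^ (1 / (2 / (2 - r))) *
        (∫⁻ x, (‖f x‖ₑ ^ (r - 1)) ^ (2 / (r - 1)) ∂μ) ^ (1 / (2 / (r - 1))) *
        (∫⁻ x, ‖d x‖ₑ ^ (2 : ℝ) ∂μ) ^ (1 / (2 : ℝ)) :=
        ENNReal.lintegral_mul_mul_le_Lp_mul_Lq_mul_Lr hξ.enorm (hf.enorm.pow_const _) hd.enorm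
          hp hq two_pos (by field_simp; ring)
    _ = _ := by
      rw [hmid, eLpNorm_eq_lintegral_rpow_enorm_toReal (by simpa using hp) ofReal_ne_top,
        toReal_ofReal hp.le, eLpNorm_eq_lintegral_rpow_enorm_toReal two_ne_zero ofNat_ne_top,
        eLpNorm_eq_lintegral_rpow_enorm_toReal two_ne_zero ofNat_ne_top, toReal_ofNat]

theorem tendsto_lintegral_enorm_mul_rpow_mul_of_tendsto_restrict {ι : Type*} {l : Filter ι}
    [l.NeBot] {s : ι → Set α} (hs : ∀ i, MeasurableSet (s i)) {r : ℝ} (hr1 : 1 < r) (hr2 : r < 2)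
    {ξ : α → E} (hξ : MemLp ξ (ENNReal.ofReal (2 / (2 - r))) μ)
    (hξ_tail : Tendsto (fun i => eLpNorm ξ (ENNReal.ofReal (2 / (2 - r))) (μ.restrict (s i)ᶜ))
      l (𝓝 0))
    {f : ℕ → α → F} {d : ℕ → α → G} (hf : ∀ n, AEStronglyMeasurable (f n) μ)
    (hd : ∀ n, AEStronglyMeasurable (d n) μ) {M : ℝ≥0∞} (hM : M ≠ ∞)
    (hf_le : ∀ n, eLpNorm (f n) 2 μ ≤ M) (hd_le : ∀ n, eLpNorm (d n) 2 μ ≤ M)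
    (hd_loc : ∀ᶠ i in l, Tendsto (fun n => eLpNorm (d n) 2 (μ.restrict (s i))) atTop (𝓝 0)) :
    Tendsto (fun n => ∫⁻ x, ‖ξ x‖ₑ * ‖f n x‖ₑ ^ (r - 1) * ‖d n x‖ₑ ∂μ) atTop (𝓝 0) := by
  set p := ENNReal.ofReal (2 / (2 - r))
  have hr : 0 ≤ r - 1 := by linarith
  have hMr : M ^ (r - 1) ≠ ∞ := ENNReal.rpow_ne_top_of_nonneg hr hM
  have hholder : ∀ (ν : Measure α), ν ≤ μ → ∀ n, ∫⁻ x, ‖ξ x‖ₑ * ‖f n x‖ₑ ^ (r - 1) * ‖d n x‖ₑ ∂ν ≤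
      eLpNorm ξ p ν * M ^ (r - 1) * eLpNorm (d n) 2 ν := fun ν hν n => by
    refine (lintegral_enorm_mul_rpow_mul_le hr1 hr2 (hξ.1.mono_measure hν)
      ((hf n).mono_measure hν) ((hd n).mono_measure hν)).trans ?_
    gcongr
    exact (eLpNorm_mono_measure _ hν).trans (hf_le n)
  refine ENNReal.tendsto_nhds_zero_of_le_add (l := l)
    (b := fun i n => eLpNorm ξ p μ * M ^ (r - 1) * eLpNorm (d n) 2 (μ.restrict (s i)))
    (c := fun i => eLpNorm ξ p (μ.restrict (s i)ᶜ) * M ^ (r - 1) * M) ?_ ?_ ?_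
  · filter_upwards [hd_loc] with i hi
    simpa using ENNReal.Tendsto.const_mul hi (Or.inr (mul_ne_top hξ.2.ne hMr))
  · simpa using ENNReal.Tendsto.mul_const (ENNReal.Tendsto.mul_const hξ_tail (Or.inr hMr))
      (Or.inr hM)
  · intro i n
    rw [← lintegral_add_compl _ (hs i)]
    gcongr
    · exact (hholder _ Measure.restrict_le_self n).trans (by gcongr; exact Measure.restrict_le_self)
    · exact (hholder _ Measure.restrict_le_self n).trans
        (by gcongr; exact (eLpNorm_restrict_le ..).trans (hd_le n))

end

theorem enorm_sub_mul_sub_le {φ : ℝ → ℝ} {c r : ℝ} (hr : 1 ≤ r)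
    (hφ : ∀ t, |φ t| ≤ r * c * |t| ^ (r - 1)) (s t : ℝ) :
    ‖(φ s - φ t) * (s - t)‖ₑ ≤ ENNReal.ofReal r *
      (‖c‖ₑ * ‖s‖ₑ ^ (r - 1) * ‖s - t‖ₑ + ‖c‖ₑ * ‖t‖ₑ ^ (r - 1) * ‖s - t‖ₑ) := by
  have hr0 : 0 ≤ r - 1 := by linarith
  have hreal : |(φ s - φ t) * (s - t)| ≤
      r * (|c| * |s| ^ (r - 1) * |s - t| + |c| * |t| ^ (r - 1) * |s - t|) := by
    have hc : r * c ≤ r * |c| := mul_le_mul_of_nonneg_left (le_abs_self c) (by linarith)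
    rw [abs_mul]
    calc |φ s - φ t| * |s - t| ≤ (|φ s| + |φ t|) * |s - t| := by gcongr; exact abs_sub _ _
      _ ≤ (r * |c| * |s| ^ (r - 1) + r * |c| * |t| ^ (r - 1)) * |s - t| := by
        gcongr
        · exact (hφ s).trans (by gcongr)
        · exact (hφ t).trans (by gcongr)
      _ = _ := by ring
  calc ‖(φ s - φ t) * (s - t)‖ₑ = ENNReal.ofReal |(φ s - φ t) * (s - t)| := by
        rw [← Real.norm_eq_abs, ofReal_norm]
    _ ≤ ENNReal.ofReal (r * (|c| * |s| ^ (r - 1) * |s - t| + |c| * |t| ^ (r - 1) * |s - t|)) :=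
        ENNReal.ofReal_le_ofReal hreal
    _ = _ := by
        rw [ENNReal.ofReal_mul (by linarith), ENNReal.ofReal_add (by positivity) (by positivity),
          ENNReal.ofReal_mul (by positivity), ENNReal.ofReal_mul (abs_nonneg _),
          ENNReal.ofReal_mul (by positivity), ENNReal.ofReal_mul (abs_nonneg _),
          ← ENNReal.ofReal_rpow_of_nonneg (abs_nonneg _) hr0,
          ← ENNReal.ofReal_rpow_of_nonneg (abs_nonneg _) hr0]
        simp only [← Real.norm_eq_abs, ofReal_norm]

theorem lintegral_enorm_sub_mul_sub_le {α : Type*} [MeasurableSpace α] {μ : Measure α}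
    {g : α → ℝ → ℝ} {ξ : α → ℝ} {r : ℝ} (hr : 1 ≤ r)
    (hg : ∀ x t, |g x t| ≤ r * ξ x * |t| ^ (r - 1)) {f f₀ : α → ℝ} (hξ : AEMeasurable ξ μ)
    (hf : AEMeasurable f μ) (hf₀ : AEMeasurable f₀ μ) :
    ∫⁻ x, ‖(g x (f x) - g x (f₀ x)) * (f x - f₀ x)‖ₑ ∂μ ≤ ENNReal.ofReal r *
      (∫⁻ x, ‖ξ x‖ₑ * ‖f x‖ₑ ^ (r - 1) * ‖f x - f₀ x‖ₑ ∂μ +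
        ∫⁻ x, ‖ξ x‖ₑ * ‖f₀ x‖ₑ ^ (r - 1) * ‖f x - f₀ x‖ₑ ∂μ) := by
  calc _ ≤ ∫⁻ x, ENNReal.ofReal r * (‖ξ x‖ₑ * ‖f x‖ₑ ^ (r - 1) * ‖f x - f₀ x‖ₑ +
        ‖ξ x‖ₑ * ‖f₀ x‖ₑ ^ (r - 1) * ‖f x - f₀ x‖ₑ) ∂μ :=
        lintegral_mono fun x => enorm_sub_mul_sub_le hr (hg x) _ _
    _ = _ := by
      rw [lintegral_const_mul' _ _ ofReal_ne_top, lintegral_add_left' (by fun_prop)]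

theorem stmt_11_general {N : ℕ} {r : ℝ} (hr1 : 1 < r) (hr2 : r < 2)
    {H : Type*} [NormedAddCommGroup H] [InnerProductSpace ℝ H]
    (E : H →L[ℝ] (Lp ℝ 2 (volume : Measure (EuclideanSpace ℝ (Fin N)))))
    (ξ : EuclideanSpace ℝ (Fin N) → ℝ)
    (hξ : MemLp ξ (ENNReal.ofReal (2/(2-r))) volume)
    (g : EuclideanSpace ℝ (Fin N) → ℝ → ℝ)
    (hg : ∀ x t, |g x t| ≤ r * ξ x * |t| ^ (r - 1))
    (u : ℕ → H) (ulim : H)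
    (hbdd : ∃ C : ℝ, ∀ n, ‖u n‖ ≤ C)
    (hloc : ∀ R : ℝ, 0 < R →
      Tendsto (fun n => ∫ x in Metric.ball (0 : EuclideanSpace ℝ (Fin N)) R,
        ((E (u n) : EuclideanSpace ℝ (Fin N) → ℝ) x -
          (E ulim : EuclideanSpace ℝ (Fin N) → ℝ) x)^2) atTop (nhds 0)) :
    Tendsto (fun n => ∫ x,
        (g x ((E (u n) : EuclideanSpace ℝ (Fin N) → ℝ) x) -
          g x ((E ulim : EuclideanSpace ℝ (Fin N) → ℝ) x)) *
        ((E (u n) : EuclideanSpace ℝ (Fin N) → ℝ) x -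
          (E ulim : EuclideanSpace ℝ (Fin N) → ℝ) x))
      atTop (nhds 0) := by
  obtain ⟨C, hC⟩ := hbdd
  set M := ‖E‖ₑ * ENNReal.ofReal C + ‖E ulim‖ₑ
  have hM : M ≠ ∞ := by finiteness
  have hEu (n : ℕ) : eLpNorm (E (u n)) 2 volume ≤ ‖E‖ₑ * ENNReal.ofReal C :=
    E.eLpNorm_apply_le (hC n)
  have hEulim : eLpNorm (E ulim) 2 volume ≤ ‖E ulim‖ₑ := (Lp.enorm_def _).ge
  have hd_le (n : ℕ) : eLpNorm (fun x => E (u n) x - E ulim x) 2 volume ≤ M :=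
    (eLpNorm_sub_le (Lp.aestronglyMeasurable _) (Lp.aestronglyMeasurable _) one_le_two).trans
      (add_le_add (hEu n) hEulim)
  have hd_loc : ∀ᶠ R in atTop, Tendsto (fun n => eLpNorm (fun x => E (u n) x - E ulim x) 2
      (volume.restrict (Metric.ball (0 : EuclideanSpace ℝ (Fin N)) R))) atTop (𝓝 0) := by
    filter_upwards [eventually_gt_atTop 0] with R hR
    exact tendsto_eLpNorm_two_of_tendsto_integral_sq
      (fun n => ((Lp.memLp _).sub (Lp.memLp _)).restrict _) (hloc R hR)
  have hlim (f : ℕ → EuclideanSpace ℝ (Fin N) → ℝ) (hf : ∀ n, AEStronglyMeasurable (f n) volume)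
      (hf_le : ∀ n, eLpNorm (f n) 2 volume ≤ M) :=
    tendsto_lintegral_enorm_mul_rpow_mul_of_tendsto_restrict (fun _ => measurableSet_ball) hr1
      hr2 hξ (hξ.tendsto_eLpNorm_restrict_compl_ball ofReal_ne_top 0) hf
      (d := fun n x => E (u n) x - E ulim x)
      (fun n => (Lp.aestronglyMeasurable _).sub (Lp.aestronglyMeasurable _)) hM hf_le hd_le hd_loc
  have hun := hlim (fun n => E (u n)) (fun _ => Lp.aestronglyMeasurable _)
    fun n => (hEu n).trans le_self_add
  have hulim := hlim (fun _ => E ulim) (fun _ => Lp.aestronglyMeasurable _)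
    fun _ => hEulim.trans le_add_self
  have hbound := ENNReal.Tendsto.const_mul (hun.add hulim) (Or.inr (ofReal_ne_top (r := r)))
  rw [add_zero, mul_zero] at hbound
  refine tendsto_zero_iff_enorm_tendsto_zero.2 (tendsto_of_tendsto_of_tendsto_of_le_of_le
    tendsto_const_nhds hbound (fun _ => zero_le) fun n => ?_)
  exact (enorm_integral_le_lintegral_enorm _).trans (lintegral_enorm_sub_mul_sub_le hr1.le hg
    hξ.1.aemeasurable (Lp.aestronglyMeasurable _).aemeasurable
    (Lp.aestronglyMeasurable _).aemeasurable)

theorem stmt_11 {N : ℕ} {r : ℝ} (hr1 : 1 < r) (hr2 : r < 2)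
    {H : Type*} [NormedAddCommGroup H] [InnerProductSpace ℝ H] [CompleteSpace H]
    (E : H →L[ℝ] (Lp ℝ 2 (volume : Measure (EuclideanSpace ℝ (Fin N)))))
    (hE_inj : Function.Injective E)
    -- local compactness of the embedding
    (hcomp : ∀ (v : ℕ → H) (C : ℝ), (∀ n, ‖v n‖ ≤ C) → ∀ R : ℝ, 0 < R →
      ∃ φ : ℕ → ℕ, StrictMono φ ∧ ∃ w : EuclideanSpace ℝ (Fin N) → ℝ,
        Tendsto (fun n => ∫ x in Metric.ball (0 : EuclideanSpace ℝ (Fin N)) R,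
          ((E (v (φ n)) : EuclideanSpace ℝ (Fin N) → ℝ) x - w x)^2) atTop (nhds 0))
    (ξ : EuclideanSpace ℝ (Fin N) → ℝ) (hξ_nonneg : ∀ x, 0 ≤ ξ x)
    (hξ : MemLp ξ (ENNReal.ofReal (2/(2-r))) volume)
    (g : EuclideanSpace ℝ (Fin N) → ℝ → ℝ)
    (hg : ∀ x t, |g x t| ≤ r * ξ x * |t| ^ (r - 1))
    (u : ℕ → H) (ulim : H)
    (hbdd : ∃ C : ℝ, ∀ n, ‖u n‖ ≤ C)
    (hweak : ∀ v : H, Tendsto (fun n => (inner ℝ (u n) v : ℝ)) atTop (nhds (inner ℝ ulim v)))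
    (hloc : ∀ R : ℝ, 0 < R →
      Tendsto (fun n => ∫ x in Metric.ball (0 : EuclideanSpace ℝ (Fin N)) R,
        ((E (u n) : EuclideanSpace ℝ (Fin N) → ℝ) x -
          (E ulim : EuclideanSpace ℝ (Fin N) → ℝ) x)^2) atTop (nhds 0)) :
    Tendsto (fun n => ∫ x,
        (g x ((E (u n) : EuclideanSpace ℝ (Fin N) → ℝ) x) -
          g x ((E ulim : EuclideanSpace ℝ (Fin N) → ℝ) x)) *
        ((E (u n) : EuclideanSpace ℝ (Fin N) → ℝ) x -
          (E ulim : EuclideanSpace ℝ (Fin N) → ℝ) x))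
      atTop (nhds 0) :=
  stmt_11_general hr1 hr2 E ξ hξ g hg u ulim hbdd hloc
end
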